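/- In the Weyl-algebra-like Poisson structure on ℂ[z,w][[∂_z,∂_w]] with {∂_z, z} = {∂_w, w} = 1 and all other brackets of generators zero, the six elements a₁ = ∂_z, a₂ = z∂_z − w∂_w, a₃ = z²∂_z − 2zw∂_w + (1/4)∂_z∂_w², a₄ = (−(1/4)∂_z² + w²)∂_w, a₅ = 2z·a₄, a₆ = (z² − (1/4)∂_w²)·a₄ satisfy the two relations a₁a₆ − a₂a₅ + a₃a₄ = 0 and (a₁a₃ − a₂²)² − a₅² + 4a₄a₆ = 0. -/

import Mathlib

open MvPolynomial

noncomputable section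

/-- The base ring `ℂ[z,w]` (with `z = X 0`, `w = X 1`). -/
abbrev PolyZW : Type := MvPolynomial (Fin 2) ℂ

/-- The commutative ring `ℂ[z,w][[∂_z,∂_w]]`, carrying the Weyl-algebra-like
Poisson structure with `{∂_z, z} = {∂_w, w} = 1` and all other brackets of
generators zero (the Poisson structure plays no role in the two purely
ring-theoretic relations below). -/
abbrev WRing : Type := MvPowerSeries (Fin 2) PolyZW

/-- the element `z` -/
def zz : WRing := MvPowerSeries.C (X 0)
/-- the element `w` -/
def ww : WRing := MvPowerSeries.C (X 1)
/-- the element `∂_z` -/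
def dz : WRing := MvPowerSeries.monomial (Finsupp.single 0 1) 1
/-- the element `∂_w` -/
def dw : WRing := MvPowerSeries.monomial (Finsupp.single 1 1) 1
/-- the scalar `1/4` -/
def quarter : WRing := MvPowerSeries.C (MvPolynomial.C ((1 : ℂ)/4))

def a₁ : WRing := dz
def a₂ : WRing := zz * dz - ww * dw
def a₃ : WRing := zz ^ 2 * dz - 2 * zz * ww * dw + quarter * dz * dw ^ 2
def a₄ : WRing := (-(quarter * dz ^ 2) + ww ^ 2) * dw
def a₅ : WRing := 2 * zz * a₄
def a₆ : WRing := (zz ^ 2 - quarter * dw ^ 2) * a₄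

/-!
Both relations are polynomial identities in `z, w, ∂_z, ∂_w` and the scalar `1/4`. The first holds
identically: its left side is `a₄` times a factor that vanishes. For the second,
`a₁a₃ − a₂² = −a₄∂_w` while `a₅² − 4a₄a₆ = 4 · (1/4) · (a₄∂_w)²`, so it reduces to `4 · (1/4) = 1`.
-/

theorem four_mul_quarter : (4 : WRing) * quarter = 1 := by
  rw [quarter, ← map_ofNat (MvPowerSeries.C.comp MvPolynomial.C) 4]
  simp only [RingHom.coe_comp, Function.comp_apply, ← map_mul]
  norm_num

theorem a₁_mul_a₆_sub_a₂_mul_a₅_add_a₃_mul_a₄ : a₁ * a₆ - a₂ * a₅ + a₃ * a₄ = 0 := by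
  simp only [a₁, a₂, a₃, a₄, a₅, a₆]
  ring

theorem a₁_mul_a₃_sub_a₂_sq : a₁ * a₃ - a₂ ^ 2 = -(a₄ * dw) := by
  simp only [a₁, a₂, a₃, a₄]
  ring

theorem a₅_sq_sub_four_mul_a₄_mul_a₆ : a₅ ^ 2 - 4 * a₄ * a₆ = (a₄ * dw) ^ 2 := by
  calc a₅ ^ 2 - 4 * a₄ * a₆ = 4 * quarter * (a₄ * dw) ^ 2 := by
        simp only [a₅, a₆]
        ring
    _ = (a₄ * dw) ^ 2 := by rw [four_mul_quarter, one_mul]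

/-- In `ℂ[z,w][[∂_z,∂_w]]`, the six elements
`a₁ = ∂_z`, `a₂ = z∂_z − w∂_w`, `a₃ = z²∂_z − 2zw∂_w + (1/4)∂_z∂_w²`,
`a₄ = (−(1/4)∂_z² + w²)∂_w`, `a₅ = 2z·a₄`, `a₆ = (z² − (1/4)∂_w²)·a₄`
satisfy `a₁a₆ − a₂a₅ + a₃a₄ = 0` and `(a₁a₃ − a₂²)² − a₅² + 4a₄a₆ = 0`. -/
theorem stmt19 :
    a₁ * a₆ - a₂ * a₅ + a₃ * a₄ = 0 ∧
    (a₁ * a₃ - a₂ ^ 2) ^ 2 - a₅ ^ 2 + 4 * a₄ * a₆ = 0 := by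
  refine ⟨a₁_mul_a₆_sub_a₂_mul_a₅_add_a₃_mul_a₄, ?_⟩
  rw [a₁_mul_a₃_sub_a₂_sq]
  linear_combination -a₅_sq_sub_four_mul_a₄_mul_a₆

end
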